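/- Define on the set D = {(x, y, z, α₁, α₂, α₃, α₄, α₅) ∈ ℂ³ × ℂ⁵ : y ≠ α₅} the maps S(x,y,z;α₁,…,α₅) = (x − √−1(α₂−α₄)/(2(y−α₅)), y, [4y²z − 8α₅yz + 4√−1(α₂−α₄)xy − 4√−1(α₂−α₄)α₅x − 2(α₁−α₃)(α₂−α₄)y + 4α₅²z + (α₂−α₄)(α₂−α₄+2(α₁−α₃)α₅)]/(4(y−α₅)²); α₁, α₄, α₃, α₂, α₅) and Π(x,y,z;α₁,…,α₅) = (x, −y, z; −α₃, α₄, −α₁, α₂, −α₅). Then S and Π map D into D, and S∘S = id, Π∘Π = id, and (S∘Π)∘(S∘Π) = id on D. -/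

import Mathlib

open Complex

noncomputable section

/-- Points `(x, y, z; α₁, α₂, α₃, α₄, α₅)` of `ℂ³ × ℂ⁵`. -/
abbrev Pt : Type := (ℂ × ℂ × ℂ) × (ℂ × ℂ × ℂ × ℂ × ℂ)

/-- The domain `D = {y ≠ α₅}`. -/
def Dom : Set Pt := {q | q.1.2.1 ≠ q.2.2.2.2.2}

/-- The Bäcklund transformation `s` acting on variables and parameters. -/
def Smap : Pt → Pt := fun q =>
  let x := q.1.1; let y := q.1.2.1; let z := q.1.2.2
  let α₁ := q.2.1; let α₂ := q.2.2.1; let α₃ := q.2.2.2.1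
  let α₄ := q.2.2.2.2.1; let α₅ := q.2.2.2.2.2
  ((x - I * (α₂ - α₄) / (2 * (y - α₅)), y,
    (4 * y ^ 2 * z - 8 * α₅ * y * z + 4 * I * (α₂ - α₄) * x * y
      - 4 * I * (α₂ - α₄) * α₅ * x - 2 * (α₁ - α₃) * (α₂ - α₄) * y
      + 4 * α₅ ^ 2 * z
      + (α₂ - α₄) * (α₂ - α₄ + 2 * (α₁ - α₃) * α₅)) / (4 * (y - α₅) ^ 2)),
   (α₁, α₄, α₃, α₂, α₅))

/-- The transformation `π` acting on variables and parameters. -/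
def Pmap : Pt → Pt := fun q =>
  ((q.1.1, -q.1.2.1, q.1.2.2),
   (-q.2.2.2.1, q.2.2.2.2.1, -q.2.1, q.2.2.1, -q.2.2.2.2.2))


/-! In the coordinates `x` and `z + x²`, the map `s` is the pair of translations
`x ↦ x - c`, `z + x² ↦ z + x² + √-1 (α₁ - α₃) c` with `c = √-1 (α₂ - α₄) / (2 (y - α₅))`.
Swapping `α₂` and `α₄` flips the sign of `c`, while `π` leaves `c` and `α₁ - α₃` unchanged,
so in both `s ∘ s` and `(s ∘ π) ∘ (s ∘ π)` the two translations cancel. -/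

def shift (y α₂ α₄ α₅ : ℂ) : ℂ := I * (α₂ - α₄) / (2 * (y - α₅))

lemma shift_swap (y α₂ α₄ α₅ : ℂ) : shift y α₄ α₂ α₅ = -shift y α₂ α₄ α₅ := by
  unfold shift; ring

lemma shift_neg_swap (y α₂ α₄ α₅ : ℂ) : shift (-y) α₄ α₂ (-α₅) = shift y α₂ α₄ α₅ := by
  unfold shift
  rw [show 2 * (-y - -α₅) = -(2 * (y - α₅)) by ring, div_neg, ← neg_div]
  ring

lemma Smap_apply {x y z α₁ α₂ α₃ α₄ α₅ : ℂ} (h : y ≠ α₅) :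
    Smap ((x, y, z), (α₁, α₂, α₃, α₄, α₅)) =
      ((x - shift y α₂ α₄ α₅, y,
        z + x ^ 2 - (x - shift y α₂ α₄ α₅) ^ 2 + I * (α₁ - α₃) * shift y α₂ α₄ α₅),
       (α₁, α₄, α₃, α₂, α₅)) := by
  have hu : y - α₅ ≠ 0 := sub_ne_zero.mpr h
  simp only [Smap, shift, Prod.mk.injEq, and_true, true_and]
  field_simp
  linear_combination (4 * (α₂ - α₄) ^ 2 - 8 * (y - α₅) * (α₂ - α₄) * (α₁ - α₃)) * I_sq

lemma Pmap_apply (x y z α₁ α₂ α₃ α₄ α₅ : ℂ) :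
    Pmap ((x, y, z), (α₁, α₂, α₃, α₄, α₅)) = ((x, -y, z), (-α₃, α₄, -α₁, α₂, -α₅)) := rfl

lemma Smap_mem_Dom {q : Pt} (hq : q ∈ Dom) : Smap q ∈ Dom := hq

lemma Pmap_mem_Dom {q : Pt} (hq : q ∈ Dom) : Pmap q ∈ Dom :=
  fun h => hq (neg_injective h)

lemma Pmap_Pmap (q : Pt) : Pmap (Pmap q) = q := by
  simp [Pmap]

lemma Smap_Smap {q : Pt} (hq : q ∈ Dom) : Smap (Smap q) = q := by
  obtain ⟨⟨x, y, z⟩, α₁, α₂, α₃, α₄, α₅⟩ := q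
  have hy : y ≠ α₅ := hq
  rw [Smap_apply hy, Smap_apply hy, shift_swap]
  simp only [Prod.mk.injEq, and_true, true_and]
  constructor <;> ring

lemma Smap_Pmap_Smap_Pmap {q : Pt} (hq : q ∈ Dom) : Smap (Pmap (Smap (Pmap q))) = q := by
  obtain ⟨⟨x, y, z⟩, α₁, α₂, α₃, α₄, α₅⟩ := q
  have hy : y ≠ α₅ := hq
  have hy' : -y ≠ -α₅ := Pmap_mem_Dom hq
  rw [Pmap_apply x y z, Smap_apply hy', Pmap_apply]
  simp only [neg_neg]
  rw [Smap_apply hy, shift_neg_swap, shift_swap]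
  simp only [Prod.mk.injEq, and_true, true_and]
  constructor <;> ring

theorem stmt11 :
    (∀ q ∈ Dom, Smap q ∈ Dom) ∧
    (∀ q ∈ Dom, Pmap q ∈ Dom) ∧
    (∀ q ∈ Dom, Smap (Smap q) = q) ∧
    (∀ q ∈ Dom, Pmap (Pmap q) = q) ∧
    (∀ q ∈ Dom, Smap (Pmap (Smap (Pmap q))) = q) :=
  ⟨fun _ => Smap_mem_Dom, fun _ => Pmap_mem_Dom, fun _ => Smap_Smap, fun q _ => Pmap_Pmap q,
    fun _ => Smap_Pmap_Smap_Pmap⟩
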